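/- Let d be the period-doubling word (fixed point of f : 0 ↦ 01, 1 ↦ 00) and z = g^ω(0) the fixed point of g : 0 ↦ 0001, 1 ↦ 0101. With respect to the reversed order 1 < 0, the lexicographically least word in the shift orbit closure of d beginning with 0 is f(z). -/

import Mathlib

/-- The prefix of length `n` of an infinite word. -/
def wordPrefix {A : Type*} (x : ℕ → A) (n : ℕ) : List A :=
  List.ofFn (fun i : Fin n => x i)

/-- A finite word is a prefix of an infinite word. -/
def IsPrefixOfWord {A : Type*} (w : List A) (x : ℕ → A) : Prop :=
  wordPrefix x w.length = w

/-- A finite word is a factor of an infinite word. -/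
def IsFactor {A : Type*} (w : List A) (x : ℕ → A) : Prop :=
  ∃ i, w = List.ofFn (fun j : Fin w.length => x (i + j))

/-- `y` belongs to the shift orbit closure of `x`. -/
def InOrbitClosure {A : Type*} (y x : ℕ → A) : Prop :=
  ∀ w, IsFactor w y → IsFactor w x

/-- A morphism `A* → B*` applied to a finite word. -/
def applyMorphism {A B : Type*} (f : A → List B) (w : List A) : List B :=
  w.flatMap f

/-- The `n`-th iterate of a morphism applied to a finite word. -/
def applyIter {A : Type*} (f : A → List A) (n : ℕ) (w : List A) : List A :=
  (applyMorphism f)^[n] w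

/-- `y = f(x)` for infinite words: every image of a prefix of `x` is a prefix of `y`. -/
def IsWordImage {A B : Type*} (f : A → List B) (x : ℕ → A) (y : ℕ → B) : Prop :=
  ∀ n, IsPrefixOfWord (applyMorphism f (wordPrefix x n)) y

/-- Prepend a finite word to an infinite word. -/
def prepend {A : Type*} (w : List A) (x : ℕ → A) : ℕ → A :=
  fun n => if h : n < w.length then w.get ⟨n, h⟩ else x (n - w.length)

/-- Strict lexicographic order on infinite words induced by the order `r` on letters. -/
def LexLt {A : Type*} (r : A → A → Prop) (x y : ℕ → A) : Prop :=
  ∃ n, (∀ i, i < n → x i = y i) ∧ r (x n) (y n)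

def LexLe {A : Type*} (r : A → A → Prop) (x y : ℕ → A) : Prop :=
  LexLt r x y ∨ x = y

/-- `l` is the lexicographically least word (w.r.t. `r`) in the shift orbit closure
of `x` beginning with the letter `a`. -/
def IsLeastWord {A : Type*} (r : A → A → Prop) (x : ℕ → A) (a : A) (l : ℕ → A) : Prop :=
  InOrbitClosure l x ∧ l 0 = a ∧ ∀ y, InOrbitClosure y x → y 0 = a → LexLe r l y

/-- `f` is prolongable on `a` (and generates an infinite word from `a`). -/
def IsGenerating {A : Type*} (f : A → List A) (a : A) : Prop :=
  ∃ s, f a = a :: s ∧ s ≠ [] ∧ ∀ n, applyIter f n s ≠ []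

/-- `x` is the pure morphic word `f^ω(a)`. -/
def IsPureMorphic {A : Type*} (f : A → List A) (a : A) (x : ℕ → A) : Prop :=
  x 0 = a ∧ IsGenerating f a ∧ IsWordImage f x x

/-- `x` is a morphic word: the image under a coding of a pure morphic word. -/
def IsMorphic {B : Type*} (x : ℕ → B) : Prop :=
  ∃ (k : ℕ) (g : Fin k → List (Fin k)) (b : Fin k) (c : Fin k → B) (t : ℕ → Fin k),
    IsPureMorphic g b t ∧ x = c ∘ t

/-- `f ∈ M_x`: each letter `b` has a nonempty "marker" word `p b` such that `f(y)`
begins with `p b` whenever `y ∈ S_x` begins with `b`, and the markers of distinct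
letters are prefix-incomparable. -/
def MemM {A B : Type*} (f : A → List B) (x : ℕ → A) : Prop :=
  ∃ p : A → List B, (∀ b, p b ≠ []) ∧
    (∀ (b : A) (y : ℕ → A), InOrbitClosure y x → y 0 = b →
      ∃ n, p b <+: applyMorphism f (wordPrefix y n)) ∧
    (∀ a b : A, a ≠ b → ¬ p a <+: p b ∧ ¬ p b <+: p a)

/-- Every factor occurs infinitely often. -/
def Recurrent {A : Type*} (x : ℕ → A) : Prop :=
  ∀ w, IsFactor w x → ∀ N, ∃ i, N ≤ i ∧ w = List.ofFn (fun j : Fin w.length => x (i + j))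

/-- Ultimately periodic infinite word. -/
def UltimatelyPeriodic {A : Type*} (x : ℕ → A) : Prop :=
  ∃ N p, 0 < p ∧ ∀ n, N ≤ n → x (n + p) = x n

/-- The period-doubling morphism `0 ↦ 01`, `1 ↦ 00`. -/
def pdMorph : Bool → List Bool := fun b => if b then [false, false] else [false, true]

/-- The morphism `0 ↦ 0001`, `1 ↦ 0101`. -/
def gMorph : Bool → List Bool :=
  fun b => if b then [false, true, false, true] else [false, false, false, true]

/-- The Chacon morphism `0 ↦ 0010`, `1 ↦ 1`. -/
def chMorph : Bool → List Bool := fun b => if b then [true] else [false, false, true, false]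

/-- The Rudin–Shapiro morphism `0 ↦ 01`, `1 ↦ 02`, `2 ↦ 31`, `3 ↦ 32`. -/
def rsMorph : Fin 4 → List (Fin 4) := ![[0, 1], [0, 2], [3, 1], [3, 2]]

/-- The Rudin–Shapiro coding `0 ↦ 0`, `1 ↦ 0`, `2 ↦ 1`, `3 ↦ 1`. -/
def rsCoding : Fin 4 → Bool := ![false, false, true, true]

/-- The 2-bit binary representation morphism `0 ↦ 00`, `1 ↦ 01`, `2 ↦ 10`, `3 ↦ 11`. -/
def hMorph : Fin 4 → List Bool := ![[false, false], [false, true], [true, false], [true, true]]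

/-! Both `d` and `f(z)` have the shape `010? 010? …`, with `d(4k+3) = d(k)` and
`f(z)(4k+3) = f(z)(k+1)`; so, by induction on the length, every factor of `f(z)` is a factor of `d`.

For minimality, a factor of `d` beginning with `01` starts at an even position, and since
`f(a) = 0ā`, comparing it with `f(z)` for `1 < 0` amounts to comparing a factor of `d` with `z` for
`0 < 1`. Now `z` begins with `000`, which occurs in `d` only at positions `≡ 2 (mod 4)`; there
`z(4k+1) = z(k)` faces `d(4(q+k)+3) = d(q+k)` and the other letters are forced, so induction on the
length of the common prefix shows that `z` is the least word of `S_d` for `0 < 1`. -/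

section Words

variable {A B : Type*}

theorem IsPrefixOfWord.apply_eq {w : List A} {x : ℕ → A} (h : IsPrefixOfWord w x) {j : ℕ}
    (hj : j < w.length) : x j = w[j] := by
  simp only [IsPrefixOfWord, wordPrefix] at h
  rw [List.getElem_of_eq h.symm hj, List.getElem_ofFn]

theorem length_applyMorphism {f : A → List B} {c : ℕ} (hc : ∀ a, (f a).length = c)
    (w : List A) : (applyMorphism f w).length = c * w.length := by
  simp [applyMorphism, List.length_flatMap, hc, mul_comm]

theorem applyMorphism_wordPrefix_succ (f : A → List B) (x : ℕ → A) (k : ℕ) :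
    applyMorphism f (wordPrefix x (k + 1)) = applyMorphism f (wordPrefix x k) ++ f (x k) := by
  rw [wordPrefix, List.ofFn_succ', List.concat_eq_append]
  simp [applyMorphism, wordPrefix]

theorem IsWordImage.apply_mul_add {f : A → List B} {c : ℕ} (hc : ∀ a, (f a).length = c)
    {x : ℕ → A} {y : ℕ → B} (h : IsWordImage f x y) (k : ℕ) {s : ℕ} (hs : s < c) :
    y (c * k + s) = (f (x k))[s]'(by rw [hc]; exact hs) := by
  have hlen : (applyMorphism f (wordPrefix x k)).length = c * k := by
    simp [length_applyMorphism hc, wordPrefix]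
  have hidx : c * k + s < (applyMorphism f (wordPrefix x (k + 1))).length := by
    simp only [length_applyMorphism hc, wordPrefix, List.length_ofFn]
    nlinarith
  rw [(h (k + 1)).apply_eq hidx]
  simp only [applyMorphism_wordPrefix_succ]
  rw [List.getElem_append_right (by omega)]
  simp [hlen]

theorem isFactor_iff {w : List A} {x : ℕ → A} :
    IsFactor w x ↔ ∃ t, ∀ j (hj : j < w.length), w[j] = x (t + j) := by
  refine exists_congr fun t => ⟨fun h j hj => ?_, fun h => List.ext_getElem (by simp) ?_⟩
  · rw [List.getElem_of_eq h hj, List.getElem_ofFn]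
  · intro j hj _
    rw [h j hj, List.getElem_ofFn]

theorem inOrbitClosure_iff {x y : ℕ → A} :
    InOrbitClosure y x ↔ ∀ n i, ∃ t, ∀ j < n, y (i + j) = x (t + j) := by
  refine ⟨fun h n i => ?_, fun h w hw => ?_⟩
  · obtain ⟨t, ht⟩ := isFactor_iff.1 (h (List.ofFn fun j : Fin n => y (i + j))
      (isFactor_iff.2 ⟨i, fun j hj => by simp⟩))
    exact ⟨t, fun j hj => by rw [← ht j (by simpa using hj), List.getElem_ofFn]⟩
  · obtain ⟨i, hi⟩ := isFactor_iff.1 hw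
    obtain ⟨t, ht⟩ := h w.length i
    exact isFactor_iff.2 ⟨t, fun j hj => (hi j hj).trans (ht j hj)⟩

theorem isLeastWord_of_agree {r : A → A → Prop} {x l : ℕ → A} {a : A}
    (hl : InOrbitClosure l x) (hl0 : l 0 = a)
    (hmin : ∀ i n, x i = a → (∀ j < n, l j = x (i + j)) → l n ≠ x (i + n) →
      r (l n) (x (i + n))) :
    IsLeastWord r x a l := by
  refine ⟨hl, hl0, fun y hy hy0 => ?_⟩
  by_cases hly : l = y
  · exact Or.inr hly
  have hne : ∃ n, l n ≠ y n := by simpa [funext_iff] using hly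
  classical
  set n := Nat.find hne
  have hagree : ∀ j < n, l j = y j := fun j hj => not_not.1 (Nat.find_min hne hj)
  obtain ⟨t, ht⟩ := inOrbitClosure_iff.1 hy (n + 1) 0
  simp only [zero_add] at ht
  have hyx : ∀ j ≤ n, y j = x (t + j) := fun j hj => ht j (by omega)
  have hdiff : l n ≠ y n := Nat.find_spec hne
  rw [hyx n le_rfl] at hdiff
  refine Or.inl ⟨n, hagree, ?_⟩
  rw [hyx n le_rfl]
  exact hmin t n (by simpa [hy0] using (hyx 0 (by omega)).symm)
    (fun j hj => (hagree j hj).trans (hyx j hj.le)) hdiff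

end Words

section BinaryMorphisms

variable {x y : ℕ → Bool}

theorem IsWordImage.pdMorph_apply_two_mul (h : IsWordImage pdMorph x y) (k : ℕ) :
    y (2 * k) = false := by
  have := h.apply_mul_add (by decide) k (by norm_num : 0 < 2)
  cases hx : x k <;> simp_all [pdMorph]

theorem IsWordImage.pdMorph_apply_two_mul_add_one (h : IsWordImage pdMorph x y) (k : ℕ) :
    y (2 * k + 1) = !x k := by
  have := h.apply_mul_add (by decide) k (by norm_num : 1 < 2)
  cases hx : x k <;> simp_all [pdMorph]

theorem IsWordImage.gMorph_apply (h : IsWordImage gMorph x y) (k : ℕ) :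
    y (4 * k) = false ∧ y (4 * k + 1) = x k ∧ y (4 * k + 2) = false ∧ y (4 * k + 3) = true := by
  have hc : ∀ b, (gMorph b).length = 4 := by decide
  have h0 := h.apply_mul_add hc k (by norm_num : 0 < 4)
  have h1 := h.apply_mul_add hc k (by norm_num : 1 < 4)
  have h2 := h.apply_mul_add hc k (by norm_num : 2 < 4)
  have h3 := h.apply_mul_add hc k (by norm_num : 3 < 4)
  cases hx : x k <;> simp_all [gMorph]

end BinaryMorphisms

section PeriodDoubling

variable {d z fz : ℕ → Bool} (hd : IsWordImage pdMorph d d)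
include hd

theorem pd_apply_four_mul (k : ℕ) :
    d (4 * k) = false ∧ d (4 * k + 1) = true ∧ d (4 * k + 2) = false ∧ d (4 * k + 3) = d k := by
  refine ⟨?_, ?_, ?_, ?_⟩
  · rw [show 4 * k = 2 * (2 * k) by ring, hd.pdMorph_apply_two_mul]
  · rw [show 4 * k + 1 = 2 * (2 * k) + 1 by ring, hd.pdMorph_apply_two_mul_add_one,
      hd.pdMorph_apply_two_mul, Bool.not_false]
  · rw [show 4 * k + 2 = 2 * (2 * k + 1) by ring, hd.pdMorph_apply_two_mul]
  · rw [show 4 * k + 3 = 2 * (2 * k + 1) + 1 by ring, hd.pdMorph_apply_two_mul_add_one,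
      hd.pdMorph_apply_two_mul_add_one, Bool.not_not]

theorem pd_odd_of_apply_eq_true {j : ℕ} (hj : d j = true) : ∃ k, j = 2 * k + 1 := by
  obtain ⟨k, rfl | rfl⟩ := Nat.even_or_odd' j
  · simp [hd.pdMorph_apply_two_mul] at hj
  · exact ⟨k, rfl⟩

theorem pd_eq_four_mul_add_two_of_zeros {i : ℕ} (h0 : d i = false) (h1 : d (i + 1) = false)
    (h2 : d (i + 2) = false) : ∃ q, i = 4 * q + 2 := by
  obtain ⟨q, r, hr, rfl⟩ : ∃ q r, r < 4 ∧ i = 4 * q + r :=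
    ⟨i / 4, i % 4, Nat.mod_lt _ (by norm_num), (Nat.div_add_mod i 4).symm⟩
  interval_cases r
  · simp [(pd_apply_four_mul hd q).2.1] at h1
  · simp [(pd_apply_four_mul hd q).2.1] at h0
  · exact ⟨q, rfl⟩
  · rw [show 4 * q + 3 + 2 = 4 * (q + 1) + 1 by ring, (pd_apply_four_mul hd (q + 1)).2.1] at h2
    exact absurd h2 (by decide)

end PeriodDoubling

section ImageOfGFix

variable {d z fz : ℕ → Bool} (hd : IsWordImage pdMorph d d) (hz : IsWordImage gMorph z z)
  (hfz : IsWordImage pdMorph z fz)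

include hz hfz in
theorem image_gFix_apply_four_mul (k : ℕ) :
    fz (4 * k) = false ∧ fz (4 * k + 1) = true ∧ fz (4 * k + 2) = false ∧
      fz (4 * k + 3) = fz (k + 1) := by
  have hz_even : ∀ m, z (2 * m) = false := by
    intro m
    obtain ⟨j, rfl | rfl⟩ := Nat.even_or_odd' m
    · rw [← mul_assoc]; exact (hz.gMorph_apply j).1
    · rw [show 2 * (2 * j + 1) = 4 * j + 2 by ring]; exact (hz.gMorph_apply j).2.2.1
  refine ⟨?_, ?_, ?_, ?_⟩
  · rw [show 4 * k = 2 * (2 * k) by ring, hfz.pdMorph_apply_two_mul]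
  · rw [show 4 * k + 1 = 2 * (2 * k) + 1 by ring, hfz.pdMorph_apply_two_mul_add_one, hz_even,
      Bool.not_false]
  · rw [show 4 * k + 2 = 2 * (2 * k + 1) by ring, hfz.pdMorph_apply_two_mul]
  · rw [show 4 * k + 3 = 2 * (2 * k + 1) + 1 by ring, hfz.pdMorph_apply_two_mul_add_one]
    obtain ⟨j, rfl | rfl⟩ := Nat.even_or_odd' k
    · rw [show 2 * (2 * j) + 1 = 4 * j + 1 by ring, (hz.gMorph_apply j).2.1,
        hfz.pdMorph_apply_two_mul_add_one]
    · rw [show 2 * (2 * j + 1) + 1 = 4 * j + 3 by ring, (hz.gMorph_apply j).2.2.2,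
        show 2 * j + 1 + 1 = 2 * (j + 1) by ring, hfz.pdMorph_apply_two_mul, Bool.not_true]

include hd hz hfz in
theorem inOrbitClosure_image_gFix : InOrbitClosure fz d := by
  rw [inOrbitClosure_iff]
  intro n
  induction n using Nat.strong_induction_on with
  | _ n ih =>
  intro i
  rcases Nat.lt_or_ge n 2 with hn | hn
  · obtain ⟨t, ht⟩ : ∃ t, d t = fz i := by
      cases fz i
      · exact ⟨0, by simpa using (pd_apply_four_mul hd 0).1⟩
      · exact ⟨1, by simpa using (pd_apply_four_mul hd 0).2.1⟩
    refine ⟨t, fun j hj => ?_⟩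
    obtain rfl : j = 0 := by omega
    exact ht.symm
  obtain ⟨a, b, hb, rfl⟩ : ∃ a b, b < 4 ∧ i = 4 * a + b :=
    ⟨i / 4, i % 4, Nat.mod_lt _ (by norm_num), (Nat.div_add_mod i 4).symm⟩
  -- By `fz (4k + 3) = fz (k + 1)` and `d (4k + 3) = d k`, the window is decided by the window of
  -- length `(b + n) / 4` at `a + 1`; where `d` repeats that one at `t`, it repeats this one at `4t + b`.
  obtain ⟨t, ht⟩ := ih ((b + n) / 4) (by omega) (a + 1)
  refine ⟨4 * t + b, fun j hj => ?_⟩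
  obtain ⟨k, s, hs, hks⟩ : ∃ k s, s < 4 ∧ b + j = 4 * k + s :=
    ⟨(b + j) / 4, (b + j) % 4, Nat.mod_lt _ (by norm_num), (Nat.div_add_mod _ 4).symm⟩
  rw [show 4 * a + b + j = 4 * (a + k) + s by omega, show 4 * t + b + j = 4 * (t + k) + s by omega]
  obtain ⟨f0, f1, f2, f3⟩ := image_gFix_apply_four_mul hz hfz (a + k)
  obtain ⟨d0, d1, d2, d3⟩ := pd_apply_four_mul hd (t + k)
  interval_cases s
  · rw [add_zero, add_zero, f0, d0]
  · rw [f1, d1]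
  · rw [f2, d2]
  · rw [f3, d3, add_right_comm]
    exact ht k (by omega)

include hd hz in
theorem gFix_apply_le_pd_of_agree {m i : ℕ} (h : ∀ j < m, z j = d (i + j)) :
    z m ≤ d (i + m) := by
  induction m using Nat.strong_induction_on generalizing i with
  | _ m ih =>
  rw [Bool.le_iff_imp]
  intro hm
  obtain ⟨z0, z1, z2, -⟩ := hz.gMorph_apply 0
  simp only [mul_zero, zero_add] at z0 z1 z2
  rw [z0] at z1
  have hm3 : 3 ≤ m := by
    by_contra
    interval_cases m <;> simp_all
  obtain ⟨q, rfl⟩ := pd_eq_four_mul_add_two_of_zeros hd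
    (by simpa [z0] using (h 0 (by omega)).symm) (by simpa [z1] using (h 1 (by omega)).symm)
    (by simpa [z2] using (h 2 (by omega)).symm)
  obtain ⟨k, s, hs, rfl⟩ : ∃ k s, s < 4 ∧ m = 4 * k + s :=
    ⟨m / 4, m % 4, Nat.mod_lt _ (by norm_num), (Nat.div_add_mod m 4).symm⟩
  obtain ⟨zk0, zk1, zk2, -⟩ := hz.gMorph_apply k
  interval_cases s
  · simp_all
  · have hagree : ∀ j < k, z j = d (q + j) := fun j hj => by
      have := h (4 * j + 1) (by omega)
      rwa [(hz.gMorph_apply j).2.1, show 4 * q + 2 + (4 * j + 1) = 4 * (q + j) + 3 by ring,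
        (pd_apply_four_mul hd (q + j)).2.2.2] at this
    rw [show 4 * q + 2 + (4 * k + 1) = 4 * (q + k) + 3 by ring,
      (pd_apply_four_mul hd (q + k)).2.2.2]
    rw [zk1] at hm
    exact Bool.le_iff_imp.1 (ih k (by omega) hagree) hm
  · simp_all
  · rw [show 4 * q + 2 + (4 * k + 3) = 4 * (q + k + 1) + 1 by ring,
      (pd_apply_four_mul hd (q + k + 1)).2.1]

include hd hz hfz in
theorem pd_apply_le_image_gFix_of_agree {i n : ℕ} (hi : d i = false)
    (h : ∀ j < n, fz j = d (i + j)) : d (i + n) ≤ fz n := by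
  rw [Bool.le_iff_imp]
  intro hn
  obtain ⟨p, hp⟩ := pd_odd_of_apply_eq_true hd hn
  obtain ⟨k, rfl | rfl⟩ := Nat.even_or_odd' n
  · exfalso
    rcases k with _ | k
    · simp [hi] at hn
    have h1 := h 1 (by omega)
    rw [show 1 = 2 * 0 + 1 from rfl, hfz.pdMorph_apply_two_mul_add_one,
      (hz.gMorph_apply 0).1] at h1
    obtain ⟨p', hp'⟩ := pd_odd_of_apply_eq_true hd h1.symm
    omega
  obtain ⟨q, rfl⟩ : ∃ q, i = 2 * q := ⟨p - k, by omega⟩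
  have hagree : ∀ j < k, z j = d (q + j) := fun j hj => by
    have := h (2 * j + 1) (by omega)
    rwa [hfz.pdMorph_apply_two_mul_add_one, show 2 * q + (2 * j + 1) = 2 * (q + j) + 1 by ring,
      hd.pdMorph_apply_two_mul_add_one, Bool.not_inj_iff] at this
  have hle := gFix_apply_le_pd_of_agree hd hz hagree
  rw [show 2 * q + (2 * k + 1) = 2 * (q + k) + 1 by ring, hd.pdMorph_apply_two_mul_add_one] at hn
  rw [hfz.pdMorph_apply_two_mul_add_one]
  revert hle hn
  cases z k <;> cases d (q + k) <;> decide

end ImageOfGFix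

theorem stmt11 (d z fz : ℕ → Bool)
    (hd : IsPureMorphic pdMorph false d) (hz : IsPureMorphic gMorph false z)
    (hfz : IsWordImage pdMorph z fz) :
    IsLeastWord (fun a b : Bool => b < a) d false fz :=
  isLeastWord_of_agree (inOrbitClosure_image_gFix hd.2.2 hz.2.2 hfz)
    (by simpa using hfz.pdMorph_apply_two_mul 0)
    fun _ _ hi h hne => lt_of_le_of_ne (pd_apply_le_image_gFix_of_agree hd.2.2 hz.2.2 hfz hi h)
      hne.symm
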